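/- Let β, r, θ, c > 0 with β > r and β c < β - 2r. Then the cubic f(u) = β c u³ - β u + 2r has exactly one zero û₁ in the open interval (0,1), Ψ₂ attains a local maximum at û₁, and: if θ = Ψ₂(û₁) then the equation Ψ₂(u) = θ has exactly one solution in (0,1) (a unique positive fixed point of V₂); if (β - r)(1 + c) < θ < Ψ₂(û₁) then the equation Ψ₂(u) = θ has exactly two solutions in (0,1) (two positive fixed points of V₂). -/

import Mathlib

/-- The map `V₂(u,v) = (u(2-u) - u v, β u v + (1-r) v - θ u² v/(1 + c u²))`. -/
noncomputable def V2 (β r θ c : ℝ) (p : ℝ × ℝ) : ℝ × ℝ :=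
  (p.1 * (2 - p.1) - p.1 * p.2,
   β * p.1 * p.2 + (1 - r) * p.2 - θ * p.1 ^ 2 * p.2 / (1 + c * p.1 ^ 2))

/-- `Ψ₂(u) = (βu - r)(1 + cu²)/u²`. -/
noncomputable def Psi2 (β r c u : ℝ) : ℝ := (β * u - r) * (1 + c * u ^ 2) / u ^ 2

/-- The cubic `f(u) = βcu³ - βu + 2r`. -/
noncomputable def fcub (β r c u : ℝ) : ℝ := β * c * u ^ 3 - β * u + 2 * r

/-!
`Ψ₂' = f / u³`. Since `f(0) = 2r > 0` and `f(1) = βc - β + 2r < 0`, `f` has a root `û₁ ∈ (0,1)`;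
writing `f(u) = (u - û₁)(βc(u² + uû₁ + û₁²) - β)` and evaluating at `u = 1` shows that the cofactor
is negative on `[0,1)`. So `f` changes sign only at `û₁`, and `Ψ₂` increases on `(0, û₁]` and
decreases on `[û₁, 1)`. The level `Ψ₂(û₁)` is then attained only at `û₁`, while a level
`θ ∈ ((β - r)(1 + c), Ψ₂(û₁))` is attained exactly once on each side of `û₁`: by the intermediate
value theorem between `Ψ₂(r/β) = 0` and `Ψ₂(û₁)`, and between `Ψ₂(û₁)` and `Ψ₂(1) = (β - r)(1 + c)`.
The positive fixed points of `V₂` are exactly the points `(u, 1 - u)` with `u ∈ (0,1)` and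
`Ψ₂(u) = θ`.
-/

open Set

section Unimodal

variable {α β : Type*} [LinearOrder α] [Preorder β] {f : α → β} {a m b : α}

lemma setOf_apply_eq_eq_singleton_of_unimodal (hmono : StrictMonoOn f (Ioc a m))
    (hanti : StrictAntiOn f (Ico m b)) (hm : m ∈ Ioo a b) :
    {u | u ∈ Ioo a b ∧ f u = f m} = {m} := by
  refine eq_singleton_iff_unique_mem.2 ⟨⟨hm, rfl⟩, fun u ⟨hu, hfu⟩ => ?_⟩
  rcases lt_trichotomy u m with h | h | h
  · exact absurd hfu (hmono ⟨hu.1, h.le⟩ ⟨hu.1.trans h, le_rfl⟩ h).ne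
  · exact h
  · exact absurd hfu (hanti ⟨le_rfl, h.trans hu.2⟩ ⟨h.le, hu.2⟩ h).ne

lemma setOf_apply_eq_eq_pair_of_unimodal (hmono : StrictMonoOn f (Ioc a m))
    (hanti : StrictAntiOn f (Ico m b)) {x y : α} {t : β} (hx : x ∈ Ioo a m) (hy : y ∈ Ioo m b)
    (hfx : f x = t) (hfy : f y = t) :
    {u | u ∈ Ioo a b ∧ f u = t} = {x, y} := by
  have hxm : f x < f m := hmono ⟨hx.1, hx.2.le⟩ ⟨hx.1.trans hx.2, le_rfl⟩ hx.2
  ext u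
  simp only [mem_ofPred_eq, mem_insert_iff, mem_singleton_iff]
  constructor
  · rintro ⟨hu, hfu⟩
    rcases lt_trichotomy u m with h | rfl | h
    · exact .inl (hmono.injOn ⟨hu.1, h.le⟩ ⟨hx.1, hx.2.le⟩ (hfu.trans hfx.symm))
    · exact absurd (hfu.trans hfx.symm) hxm.ne'
    · exact .inr (hanti.injOn ⟨h.le, hu.2⟩ ⟨hy.1.le, hy.2⟩ (hfu.trans hfy.symm))
  · rintro (rfl | rfl)
    · exact ⟨⟨hx.1, hx.2.trans hy.1 |>.trans hy.2⟩, hfx⟩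
    · exact ⟨⟨hx.1.trans hx.2 |>.trans hy.1, hy.2⟩, hfy⟩

end Unimodal

variable {β r θ c : ℝ}

def fcubCofactor (β c w u : ℝ) : ℝ := β * c * (u ^ 2 + u * w + w ^ 2) - β

lemma fcub_eq_mul_fcubCofactor {w : ℝ} (hw : fcub β r c w = 0) (u : ℝ) :
    fcub β r c u = (u - w) * fcubCofactor β c w u := by
  unfold fcub fcubCofactor at *
  linear_combination hw

lemma fcub_one : fcub β r c 1 = β * c - β + 2 * r := by
  norm_num [fcub]

lemma fcubCofactor_neg (hβ : 0 < β) (hc : 0 ≤ c) (hf1 : β * c < β - 2 * r) {w u : ℝ}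
    (hw : w ∈ Ioo 0 1) (hfw : fcub β r c w = 0) (hu0 : 0 ≤ u) (hu1 : u < 1) :
    fcubCofactor β c w u < 0 := by
  have hone : (1 - w) * fcubCofactor β c w 1 < 0 := by
    rw [← fcub_eq_mul_fcubCofactor hfw, fcub_one]
    linarith
  have hcof_one : fcubCofactor β c w 1 < 0 := neg_of_mul_neg_right hone (by linarith [hw.2])
  have hsum : u ^ 2 + u * w + w ^ 2 < 1 ^ 2 + 1 * w + w ^ 2 := by nlinarith [hw.1]
  unfold fcubCofactor at *
  nlinarith [mul_nonneg hβ.le hc]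

lemma fcub_pos_of_lt_root (hβ : 0 < β) (hc : 0 ≤ c) (hf1 : β * c < β - 2 * r) {w u : ℝ}
    (hw : w ∈ Ioo 0 1) (hfw : fcub β r c w = 0) (hu0 : 0 ≤ u) (huw : u < w) :
    0 < fcub β r c u := by
  rw [fcub_eq_mul_fcubCofactor hfw]
  exact mul_pos_of_neg_of_neg (by linarith)
    (fcubCofactor_neg hβ hc hf1 hw hfw hu0 (huw.trans hw.2))

lemma fcub_neg_of_root_lt (hβ : 0 < β) (hc : 0 ≤ c) (hf1 : β * c < β - 2 * r) {w u : ℝ}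
    (hw : w ∈ Ioo 0 1) (hfw : fcub β r c w = 0) (hwu : w < u) (hu1 : u < 1) :
    fcub β r c u < 0 := by
  rw [fcub_eq_mul_fcubCofactor hfw]
  exact mul_neg_of_pos_of_neg (by linarith)
    (fcubCofactor_neg hβ hc hf1 hw hfw (hw.1.trans hwu).le hu1)

lemma exists_fcub_eq_zero (hr : 0 < r) (hf1 : β * c < β - 2 * r) :
    ∃ w ∈ Ioo (0 : ℝ) 1, fcub β r c w = 0 := by
  have hcont : Continuous (fcub β r c) := by unfold fcub; fun_prop
  refine intermediate_value_Ioo' zero_le_one hcont.continuousOn ⟨?_, ?_⟩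
  · rw [fcub_one]; linarith
  · simp [fcub, hr]

lemma eq_of_fcub_eq_zero (hβ : 0 < β) (hc : 0 ≤ c) (hf1 : β * c < β - 2 * r) {w u : ℝ}
    (hw : w ∈ Ioo 0 1) (hfw : fcub β r c w = 0) (hu : u ∈ Ioo 0 1) (hfu : fcub β r c u = 0) :
    u = w := by
  rcases lt_trichotomy u w with h | h | h
  · exact absurd hfu (fcub_pos_of_lt_root hβ hc hf1 hw hfw hu.1.le h).ne'
  · exact h
  · exact absurd hfu (fcub_neg_of_root_lt hβ hc hf1 hw hfw h hu.2).ne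

lemma hasDerivAt_psi2 (β r c : ℝ) {u : ℝ} (hu : u ≠ 0) :
    HasDerivAt (Psi2 β r c) (fcub β r c u / u ^ 3) u := by
  have hnum : HasDerivAt (fun u : ℝ => (β * u - r) * (1 + c * u ^ 2))
      (β * (1 + c * u ^ 2) + (β * u - r) * (2 * c * u)) u := by
    have h := (((hasDerivAt_id u).const_mul β).sub_const r).mul
      (((hasDerivAt_pow 2 u).const_mul c).const_add 1)
    simp only [id_eq, mul_one] at h
    exact h.congr_deriv (by push_cast; ring)
  refine (hnum.div (hasDerivAt_pow 2 u) (pow_ne_zero 2 hu)).congr_deriv ?_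
  unfold fcub
  field_simp
  ring

lemma continuousOn_psi2 (β r c : ℝ) {s : Set ℝ} (hs : (0 : ℝ) ∉ s) :
    ContinuousOn (Psi2 β r c) s := fun _ hx =>
  (hasDerivAt_psi2 β r c (ne_of_mem_of_not_mem hx hs)).continuousAt.continuousWithinAt

lemma strictMonoOn_psi2 (hβ : 0 < β) (hc : 0 ≤ c) (hf1 : β * c < β - 2 * r) {w : ℝ}
    (hw : w ∈ Ioo 0 1) (hfw : fcub β r c w = 0) :
    StrictMonoOn (Psi2 β r c) (Ioc 0 w) := by
  refine strictMonoOn_of_deriv_pos (convex_Ioc 0 w)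
    (continuousOn_psi2 β r c fun h => lt_irrefl _ h.1) fun x hx => ?_
  rw [interior_Ioc] at hx
  rw [(hasDerivAt_psi2 β r c hx.1.ne').deriv]
  exact div_pos (fcub_pos_of_lt_root hβ hc hf1 hw hfw hx.1.le hx.2) (pow_pos hx.1 3)

lemma strictAntiOn_psi2 (hβ : 0 < β) (hc : 0 ≤ c) (hf1 : β * c < β - 2 * r) {w : ℝ}
    (hw : w ∈ Ioo 0 1) (hfw : fcub β r c w = 0) :
    StrictAntiOn (Psi2 β r c) (Ico w 1) := by
  refine strictAntiOn_of_deriv_neg (convex_Ico w 1)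
    (continuousOn_psi2 β r c fun h => hw.1.not_ge h.1) fun x hx => ?_
  rw [interior_Ico] at hx
  have hx0 : 0 < x := hw.1.trans hx.1
  rw [(hasDerivAt_psi2 β r c hx0.ne').deriv]
  exact div_neg_of_neg_of_pos (fcub_neg_of_root_lt hβ hc hf1 hw hfw hx.1 hx.2) (pow_pos hx0 3)

lemma psi2_one : Psi2 β r c 1 = (β - r) * (1 + c) := by
  simp [Psi2]

lemma psi2_div_self (hβ : β ≠ 0) : Psi2 β r c (r / β) = 0 := by
  simp [Psi2, mul_div_cancel₀ r hβ]

lemma div_lt_of_psi2_pos (hβ : 0 < β) (hc : 0 ≤ c) {u : ℝ} (hu : 0 < Psi2 β r c u) :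
    r / β < u := by
  rw [div_lt_iff₀ hβ]
  by_contra! h
  refine hu.not_ge (div_nonpos_of_nonpos_of_nonneg ?_ (sq_nonneg u))
  exact mul_nonpos_of_nonpos_of_nonneg (by linarith) (by positivity)

lemma exists_psi2_eq_on_both_sides (hβ : 0 < β) (hr : 0 < r) (hθ : 0 < θ) (hc : 0 ≤ c)
    {w : ℝ} (hw : w ∈ Ioo 0 1) (hlo : (β - r) * (1 + c) < θ) (hhi : θ < Psi2 β r c w) :
    (∃ x ∈ Ioo 0 w, Psi2 β r c x = θ) ∧ ∃ y ∈ Ioo w 1, Psi2 β r c y = θ := by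
  have hrβ : 0 < r / β := div_pos hr hβ
  constructor
  · have hrβw := div_lt_of_psi2_pos hβ hc (hθ.trans hhi)
    obtain ⟨x, hx, hfx⟩ := intermediate_value_Ioo hrβw.le
      (continuousOn_psi2 β r c fun h => hrβ.not_ge h.1)
      (by rw [psi2_div_self hβ.ne']; exact ⟨hθ, hhi⟩)
    exact ⟨x, ⟨hrβ.trans hx.1, hx.2⟩, hfx⟩
  · exact intermediate_value_Ioo' hw.2.le (continuousOn_psi2 β r c fun h => hw.1.not_ge h.1)
      (by rw [psi2_one]; exact ⟨hlo, hhi⟩)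

lemma V2_eq_self_iff (hc : 0 ≤ c) {u v : ℝ} (hu : 0 < u) (hv : 0 < v) :
    V2 β r θ c (u, v) = (u, v) ↔ v = 1 - u ∧ u ∈ Ioo 0 1 ∧ Psi2 β r c u = θ := by
  have hD : 1 + c * u ^ 2 ≠ 0 := by positivity
  have hfst : u * (2 - u) - u * v = u ↔ v = 1 - u := by
    rw [← sub_eq_zero, show u * (2 - u) - u * v - u = u * (1 - u - v) by ring, mul_eq_zero,
      or_iff_right hu.ne', sub_eq_zero, eq_comm]
  have hsnd : β * u * v + (1 - r) * v - θ * u ^ 2 * v / (1 + c * u ^ 2) = v ↔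
      Psi2 β r c u = θ := by
    rw [← sub_eq_zero, show β * u * v + (1 - r) * v - θ * u ^ 2 * v / (1 + c * u ^ 2) - v =
        ((β * u - r) * (1 + c * u ^ 2) - θ * u ^ 2) * v / (1 + c * u ^ 2) by field_simp; ring,
      div_eq_zero_iff, or_iff_left hD, mul_eq_zero, or_iff_left hv.ne', sub_eq_zero, Psi2,
      div_eq_iff (by positivity)]
  simp only [V2, Prod.mk.injEq, hfst, hsnd]
  constructor
  · rintro ⟨rfl, hψ⟩
    exact ⟨rfl, ⟨hu, by linarith⟩, hψ⟩
  · exact fun ⟨hvu, _, hψ⟩ => ⟨hvu, hψ⟩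

lemma setOf_pos_fixed_V2_eq_image (hc : 0 ≤ c) :
    {p : ℝ × ℝ | 0 < p.1 ∧ 0 < p.2 ∧ V2 β r θ c p = p} =
      (fun u => (u, 1 - u)) '' {u | u ∈ Ioo 0 1 ∧ Psi2 β r c u = θ} := by
  ext ⟨u, v⟩
  simp only [mem_ofPred_eq, mem_image, Prod.mk.injEq]
  constructor
  · rintro ⟨hu, hv, hfix⟩
    obtain ⟨rfl, hu1, hψ⟩ := (V2_eq_self_iff hc hu hv).1 hfix
    exact ⟨u, ⟨hu1, hψ⟩, rfl, rfl⟩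
  · rintro ⟨u, ⟨hu1, hψ⟩, rfl, rfl⟩
    have hv : 0 < 1 - u := sub_pos.2 hu1.2
    exact ⟨hu1.1, hv, (V2_eq_self_iff hc hu1.1 hv).2 ⟨rfl, hu1, hψ⟩⟩

theorem one_or_two_positive_fixed_points_V2_general (β r θ c : ℝ) (hβ : 0 < β) (hr : 0 < r)
    (hθ : 0 < θ) (hc : 0 < c) (hf1 : β * c < β - 2 * r) :
    (∃! u : ℝ, u ∈ Set.Ioo (0 : ℝ) 1 ∧ fcub β r c u = 0) ∧
    (∀ u1 : ℝ, u1 ∈ Set.Ioo (0 : ℝ) 1 → fcub β r c u1 = 0 →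
      IsLocalMax (Psi2 β r c) u1 ∧
      (θ = Psi2 β r c u1 →
        (∃! u : ℝ, u ∈ Set.Ioo (0 : ℝ) 1 ∧ Psi2 β r c u = θ) ∧
        (∃! p : ℝ × ℝ, 0 < p.1 ∧ 0 < p.2 ∧ V2 β r θ c p = p)) ∧
      ((β - r) * (1 + c) < θ → θ < Psi2 β r c u1 →
        {u : ℝ | u ∈ Set.Ioo (0 : ℝ) 1 ∧ Psi2 β r c u = θ}.ncard = 2 ∧
        {p : ℝ × ℝ | 0 < p.1 ∧ 0 < p.2 ∧ V2 β r θ c p = p}.ncard = 2)) := by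
  obtain ⟨w, hw, hfw⟩ := exists_fcub_eq_zero hr hf1
  refine ⟨⟨w, ⟨hw, hfw⟩, fun u hu => eq_of_fcub_eq_zero hβ hc.le hf1 hw hfw hu.1 hu.2⟩,
    fun u1 h1 hz => ?_⟩
  have hmono := strictMonoOn_psi2 hβ hc.le hf1 h1 hz
  have hanti := strictAntiOn_psi2 hβ hc.le hf1 h1 hz
  refine ⟨isLocalMax_of_mono_anti h1.1 h1.2 hmono.monotoneOn hanti.antitoneOn,
    fun hθ1 => ?_, fun hlo hhi => ?_⟩
  · have hlevel : {u | u ∈ Ioo 0 1 ∧ Psi2 β r c u = θ} = {u1} := by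
      subst hθ1
      exact setOf_apply_eq_eq_singleton_of_unimodal hmono hanti h1
    have hfixed1 : {p : ℝ × ℝ | 0 < p.1 ∧ 0 < p.2 ∧ V2 β r θ c p = p} = {(u1, 1 - u1)} := by
      rw [setOf_pos_fixed_V2_eq_image hc.le, hlevel, image_singleton]
    exact ⟨singleton_iff_unique_mem.1 ⟨u1, hlevel⟩, singleton_iff_unique_mem.1 ⟨_, hfixed1⟩⟩
  · obtain ⟨⟨x, hx, hfx⟩, ⟨y, hy, hfy⟩⟩ :=
      exists_psi2_eq_on_both_sides hβ hr hθ hc.le h1 hlo hhi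
    have hxy : x ≠ y := (hx.2.trans hy.1).ne
    have hlevel := setOf_apply_eq_eq_pair_of_unimodal hmono hanti hx hy hfx hfy
    rw [setOf_pos_fixed_V2_eq_image hc.le, ncard_image_of_injective _ fun _ _ h => congrArg Prod.fst h, hlevel]
    exact ⟨ncard_pair hxy, ncard_pair hxy⟩

/-- If `β > r` and `βc < β - 2r`, then `f` has exactly one zero `û₁ ∈ (0,1)`, `Ψ₂`
has a local maximum at `û₁`, and:  if `θ = Ψ₂(û₁)` then `Ψ₂(u) = θ` has exactly one
solution in `(0,1)` (a unique positive fixed point of `V₂`); if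
`(β-r)(1+c) < θ < Ψ₂(û₁)` then it has exactly two solutions in `(0,1)`
(two positive fixed points of `V₂`). -/
theorem one_or_two_positive_fixed_points_V2 (β r θ c : ℝ) (hβ : 0 < β) (hr : 0 < r)
    (hθ : 0 < θ) (hc : 0 < c) (hβr : r < β) (hf1 : β * c < β - 2 * r) :
    (∃! u : ℝ, u ∈ Set.Ioo (0 : ℝ) 1 ∧ fcub β r c u = 0) ∧
    (∀ u1 : ℝ, u1 ∈ Set.Ioo (0 : ℝ) 1 → fcub β r c u1 = 0 →
      IsLocalMax (Psi2 β r c) u1 ∧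
      (θ = Psi2 β r c u1 →
        (∃! u : ℝ, u ∈ Set.Ioo (0 : ℝ) 1 ∧ Psi2 β r c u = θ) ∧
        (∃! p : ℝ × ℝ, 0 < p.1 ∧ 0 < p.2 ∧ V2 β r θ c p = p)) ∧
      ((β - r) * (1 + c) < θ → θ < Psi2 β r c u1 →
        {u : ℝ | u ∈ Set.Ioo (0 : ℝ) 1 ∧ Psi2 β r c u = θ}.ncard = 2 ∧
        {p : ℝ × ℝ | 0 < p.1 ∧ 0 < p.2 ∧ V2 β r θ c p = p}.ncard = 2)) :=
  one_or_two_positive_fixed_points_V2_general β r θ c hβ hr hθ hc hf1
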